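/- In the ring R = k[x,y,z,u]/(x²+yz, xy−yu, xz, xu, y²), the ideal quotients (0) : (x) = (z,u) and (0) : (z) = (x) hold, where (x), (z), (z,u) denote the ideals of R generated by the residue classes of the indicated variables. -/

import Mathlib

open MvPolynomial

set_option synthInstance.maxHeartbeats 1000000
set_option maxHeartbeats 1000000

noncomputable section

/-- The defining ideal `(x²+yz, xy−yu, xz, xu, y²)` of Conca's ring, with
`x = X 0`, `y = X 1`, `z = X 2`, `u = X 3`. -/
def concaIdeal (k : Type*) [Field k] : Ideal (MvPolynomial (Fin 4) k) :=
  Ideal.span {X 0 ^ 2 + X 1 * X 2, X 0 * X 1 - X 1 * X 3, X 0 * X 2, X 0 * X 3, X 1 ^ 2}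

/-- The ring `R = k[x,y,z,u]/(x²+yz, xy−yu, xz, xu, y²)`. -/
abbrev ConcaRing (k : Type*) [Field k] := MvPolynomial (Fin 4) k ⧸ concaIdeal k

/-- The residue classes of the variables `x, y, z, u` in `R`. -/
def cv (k : Type*) [Field k] (i : Fin 4) : ConcaRing k :=
  Ideal.Quotient.mk (concaIdeal k) (X i)

/-! A polynomial `f` with `f x ∈ I` (resp. `f z ∈ I`) is pinned down by a few coefficients of
degree at most two: the linear forms `coeff_x`, `coeff_{x²} − coeff_{yz}` and
`coeff_{xy} + coeff_{yu}` vanish on `I`, because they only see the quadratic part of an element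
of `I`, a `k`-combination of the generators. Moreover `I ⊆ (x, y)`, and `(x, y)` is a monomial
prime not containing `z`. This forces `f` into the monomial ideal `(z, u, x², xy, y²)`
(resp. `(x, y², yz, yu)`), whose image in `R` is `(z, u)` (resp. `(x)`) by the relations
`x² = -yz`, `xy = yu`, `y² = 0`. -/

theorem Ideal.bot_colon_span_singleton_mk {A : Type*} [CommRing A] (I : Ideal A) (a : A) :
    (⊥ : Ideal (A ⧸ I)).colon (Ideal.span {Ideal.Quotient.mk I a}) =
      (I.colon (Ideal.span {a})).map (Ideal.Quotient.mk I) := by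
  ext r
  obtain ⟨f, rfl⟩ := Ideal.Quotient.mk_surjective r
  rw [Ideal.mem_colon_span_singleton, Ideal.mem_bot, ← map_mul, Ideal.Quotient.eq_zero_iff_mem,
    Ideal.mem_quotient_iff_mem Ideal.le_colon, Ideal.mem_colon_span_singleton]

namespace ConcaRing

variable {k : Type*} [Field k]

local notation "𝐞" i:max => (Finsupp.single i 1 : Fin 4 →₀ ℕ)

theorem coeff_of_mem_concaIdeal {p : MvPolynomial (Fin 4) k} (hp : p ∈ concaIdeal k) :
    coeff (𝐞 0) p = 0 ∧ coeff (𝐞 0 + 𝐞 0) p = coeff (𝐞 1 + 𝐞 2) p ∧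
      coeff (𝐞 0 + 𝐞 1) p + coeff (𝐞 1 + 𝐞 3) p = 0 := by
  simp only [concaIdeal, Ideal.mem_span_insert, Ideal.mem_span_singleton'] at hp
  obtain ⟨a, -, ⟨b, -, ⟨c, -, ⟨d, -, ⟨e, rfl⟩, rfl⟩, rfl⟩, rfl⟩, rfl⟩ := hp
  have hexpand : a * (X 0 ^ 2 + X 1 * X 2) + (b * (X 0 * X 1 - X 1 * X 3) + (c * (X 0 * X 2) +
      (d * (X 0 * X 3) + e * X 1 ^ 2))) = a * X 0 * X 0 + a * X 1 * X 2 + b * X 0 * X 1 -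
      b * X 1 * X 3 + c * X 0 * X 2 + d * X 0 * X 3 + e * X 1 * X 1 := by ring
  rw [hexpand]
  refine ⟨?_, ?_, ?_⟩ <;> simp [coeff_mul_X']

theorem concaIdeal_le_span_X_zero_X_one : concaIdeal k ≤ Ideal.span (X '' {0, 1}) := by
  simp only [concaIdeal, Ideal.span_le, Set.insert_subset_iff, Set.singleton_subset_iff,
    SetLike.mem_coe, Set.image_pair]
  refine ⟨?_, ?_, ?_, ?_, ?_⟩ <;> rw [Ideal.mem_span_pair]
  exacts [⟨X 0, X 2, by ring⟩, ⟨X 1, -X 3, by ring⟩, ⟨X 2, 0, by ring⟩, ⟨X 3, 0, by ring⟩,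
    ⟨0, X 1, by ring⟩]

theorem mem_span_of_mul_X_zero_mem {f : MvPolynomial (Fin 4) k} (hf : f * X 0 ∈ concaIdeal k) :
    f ∈ Ideal.span {X 2, X 3, X 0 ^ 2, X 0 * X 1, X 1 ^ 2} := by
  obtain ⟨hlin, hquad, hmixed⟩ := coeff_of_mem_concaIdeal hf
  have h1 : coeff 0 f = 0 := by simpa [coeff_mul_X'] using hlin
  have hx : coeff (𝐞 0) f = 0 := by simpa [coeff_mul_X'] using hquad
  have hy : coeff (𝐞 1) f = 0 := by simpa [coeff_mul_X'] using hmixed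
  have hmonomial : ({X 2, X 3, X 0 ^ 2, X 0 * X 1, X 1 ^ 2} : Set (MvPolynomial (Fin 4) k)) =
      (monomial · 1) '' {𝐞 2, 𝐞 3, Finsupp.single 0 2, 𝐞 0 + 𝐞 1, Finsupp.single 1 2} := by
    rw [X_pow_eq_monomial, X_pow_eq_monomial]
    simp only [X, monomial_mul, one_mul, Set.image_insert_eq, Set.image_singleton]
  rw [hmonomial, mem_ideal_span_monomial_image]
  intro m hm
  rw [mem_support_iff] at hm
  have h0 : m ≠ 0 := by rintro rfl; exact hm h1
  have hx : m ≠ 𝐞 0 := by rintro rfl; exact hm hx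
  have hy : m ≠ 𝐞 1 := by rintro rfl; exact hm hy
  simp only [ne_eq, Finsupp.ext_iff, Fin.forall_fin_succ] at h0 hx hy
  simp [Finsupp.le_def, Fin.forall_fin_succ, Finsupp.single_apply] at h0 hx hy ⊢
  omega

theorem mem_span_of_mul_X_two_mem {f : MvPolynomial (Fin 4) k} (hf : f * X 2 ∈ concaIdeal k) :
    f ∈ Ideal.span {X 0, X 1 ^ 2, X 1 * X 2, X 1 * X 3} := by
  obtain ⟨-, hquad, -⟩ := coeff_of_mem_concaIdeal hf
  have hy : coeff (𝐞 1) f = 0 := by simpa [coeff_mul_X'] using hquad.symm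
  have hsupp : ∀ m ∈ f.support, m 0 ≠ 0 ∨ m 1 ≠ 0 := by
    simpa using mem_ideal_span_X_image.1 (concaIdeal_le_span_X_zero_X_one hf)
  have hmonomial : ({X 0, X 1 ^ 2, X 1 * X 2, X 1 * X 3} : Set (MvPolynomial (Fin 4) k)) =
      (monomial · 1) '' {𝐞 0, Finsupp.single 1 2, 𝐞 1 + 𝐞 2, 𝐞 1 + 𝐞 3} := by
    rw [X_pow_eq_monomial]
    simp only [X, monomial_mul, one_mul, Set.image_insert_eq, Set.image_singleton]
  rw [hmonomial, mem_ideal_span_monomial_image]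
  intro m hm
  have hm01 := hsupp m hm
  rw [mem_support_iff] at hm
  have hy : m ≠ 𝐞 1 := by rintro rfl; exact hm hy
  simp only [ne_eq, Finsupp.ext_iff, Fin.forall_fin_succ] at hy
  simp [Finsupp.le_def, Fin.forall_fin_succ, Finsupp.single_apply] at hy ⊢
  omega

@[simp]
theorem mk_X (i : Fin 4) : Ideal.Quotient.mk (concaIdeal k) (X i) = cv k i := rfl

theorem cv_zero_sq : cv k 0 ^ 2 = -(cv k 1 * cv k 2) := by
  rw [eq_neg_iff_add_eq_zero, ← mk_X, ← mk_X, ← mk_X, ← map_pow, ← map_mul, ← map_add]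
  exact Ideal.Quotient.eq_zero_iff_mem.2 (Ideal.subset_span (by simp))

theorem cv_zero_mul_cv_one : cv k 0 * cv k 1 = cv k 1 * cv k 3 := by
  rw [← sub_eq_zero, ← mk_X, ← mk_X, ← mk_X, ← map_mul, ← map_mul, ← map_sub]
  exact Ideal.Quotient.eq_zero_iff_mem.2 (Ideal.subset_span (by simp))

theorem cv_zero_mul_cv_two : cv k 0 * cv k 2 = 0 := by
  rw [← mk_X, ← mk_X, ← map_mul]
  exact Ideal.Quotient.eq_zero_iff_mem.2 (Ideal.subset_span (by simp))

theorem cv_zero_mul_cv_three : cv k 0 * cv k 3 = 0 := by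
  rw [← mk_X, ← mk_X, ← map_mul]
  exact Ideal.Quotient.eq_zero_iff_mem.2 (Ideal.subset_span (by simp))

theorem cv_one_sq : cv k 1 ^ 2 = 0 := by
  rw [← mk_X, ← map_pow]
  exact Ideal.Quotient.eq_zero_iff_mem.2 (Ideal.subset_span (by simp))

theorem map_span_le_span_cv_two_cv_three :
    (Ideal.span {X 2, X 3, X 0 ^ 2, X 0 * X 1, X 1 ^ 2}).map (Ideal.Quotient.mk (concaIdeal k)) ≤
      Ideal.span {cv k 2, cv k 3} := by
  simp only [Ideal.map_span, Set.image_insert_eq, Set.image_singleton, map_pow, map_mul, mk_X,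
    cv_zero_sq, cv_zero_mul_cv_one, cv_one_sq, Ideal.span_le, Set.insert_subset_iff,
    Set.singleton_subset_iff, SetLike.mem_coe]
  exact ⟨Ideal.subset_span (by simp), Ideal.subset_span (by simp),
    neg_mem (Ideal.mul_mem_left _ _ (Ideal.subset_span (by simp))),
    Ideal.mul_mem_left _ _ (Ideal.subset_span (by simp)), zero_mem _⟩

theorem map_span_le_span_cv_zero :
    (Ideal.span {X 0, X 1 ^ 2, X 1 * X 2, X 1 * X 3}).map (Ideal.Quotient.mk (concaIdeal k)) ≤
      Ideal.span {cv k 0} := by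
  simp only [Ideal.map_span, Set.image_insert_eq, Set.image_singleton, map_pow, map_mul, mk_X,
    cv_one_sq, Ideal.span_le, Set.insert_subset_iff, Set.singleton_subset_iff, SetLike.mem_coe]
  rw [← neg_neg (cv k 1 * cv k 2), ← cv_zero_sq, ← cv_zero_mul_cv_one]
  have hx := Ideal.mem_span_singleton_self (cv k 0)
  exact ⟨hx, zero_mem _, neg_mem (Ideal.pow_mem_of_mem _ hx 2 two_pos),
    Ideal.mul_mem_right _ _ hx⟩

theorem bot_colon_span_cv_zero :
    (⊥ : Ideal (ConcaRing k)).colon (Ideal.span {cv k 0}) = Ideal.span {cv k 2, cv k 3} := by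
  apply le_antisymm
  · rw [← mk_X, Ideal.bot_colon_span_singleton_mk]
    calc _ ≤ (Ideal.span {X 2, X 3, X 0 ^ 2, X 0 * X 1, X 1 ^ 2}).map (Ideal.Quotient.mk _) :=
          Ideal.map_mono fun f hf ↦
            mem_span_of_mul_X_zero_mem (Ideal.mem_colon_span_singleton.1 hf)
      _ ≤ _ := map_span_le_span_cv_two_cv_three
  · simp only [Ideal.span_le, Set.insert_subset_iff, Set.singleton_subset_iff, SetLike.mem_coe,
      Ideal.mem_colon_span_singleton, Ideal.mem_bot]
    exact ⟨by rw [mul_comm, cv_zero_mul_cv_two], by rw [mul_comm, cv_zero_mul_cv_three]⟩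

theorem bot_colon_span_cv_two :
    (⊥ : Ideal (ConcaRing k)).colon (Ideal.span {cv k 2}) = Ideal.span {cv k 0} := by
  apply le_antisymm
  · rw [← mk_X, Ideal.bot_colon_span_singleton_mk]
    calc _ ≤ (Ideal.span {X 0, X 1 ^ 2, X 1 * X 2, X 1 * X 3}).map (Ideal.Quotient.mk _) :=
          Ideal.map_mono fun f hf ↦
            mem_span_of_mul_X_two_mem (Ideal.mem_colon_span_singleton.1 hf)
      _ ≤ _ := map_span_le_span_cv_zero
  · rw [Ideal.span_le, Set.singleton_subset_iff, SetLike.mem_coe,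
      Ideal.mem_colon_span_singleton, Ideal.mem_bot, cv_zero_mul_cv_two]

end ConcaRing

theorem stmt_2 (k : Type*) [Field k] :
    Submodule.colon (⊥ : Ideal (ConcaRing k)) (Ideal.span {cv k 0}) =
      Ideal.span {cv k 2, cv k 3} ∧
    Submodule.colon (⊥ : Ideal (ConcaRing k)) (Ideal.span {cv k 2}) =
      Ideal.span {cv k 0} :=
  ⟨ConcaRing.bot_colon_span_cv_zero, ConcaRing.bot_colon_span_cv_two⟩
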